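/- Let Σ = σ²I_p + U Γ Uᵀ with U ∈ O(p, r) and Γ = diag(λ1, ..., λr), λ1 ≥ ... ≥ λr > 0. Then for any W ∈ O(p, r), (λr/2)·‖UUᵀ − WWᵀ‖_F² ≤ ⟨Σ, UUᵀ − WWᵀ⟩ ≤ (λ1/2)·‖UUᵀ − WWᵀ‖_F². -/

import Mathlib

open Matrix

/-- Frobenius norm of a real matrix. -/
noncomputable def frob {m n : ℕ} (A : Matrix (Fin m) (Fin n) ℝ) : ℝ :=
  Real.sqrt (∑ i, ∑ j, (A i j) ^ 2)

/-! Put `K = Uᵀ (1 - W Wᵀ) U`; it is positive semidefinite because `1 - W Wᵀ` is an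
orthogonal projection. The isotropic part of `Σ` pairs to zero with `UUᵀ - WWᵀ`, since both
projections have trace `r`; the spike gives `⟨U Γ Uᵀ, UUᵀ - WWᵀ⟩ = tr (Γ K) = ∑ λᵢ Kᵢᵢ`; and
`‖UUᵀ - WWᵀ‖_F² = 2 tr K`. As `Kᵢᵢ ≥ 0`, bounding each `λᵢ` between `λ_r` and `λ_1` gives both
inequalities. -/

namespace Matrix

variable {m n : Type*} [Fintype m] [Fintype n]

theorem trace_diagonal_mul_eq_sum [DecidableEq n] (l : n → ℝ) (A : Matrix n n ℝ) :
    trace (diagonal l * A) = ∑ i, l i * A i i := by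
  simp [trace, diagonal_mul]

theorem PosSemidef.mul_trace_le_trace_diagonal_mul [DecidableEq n] {A : Matrix n n ℝ}
    (hA : A.PosSemidef) {l : n → ℝ} {a : ℝ} (ha : ∀ i, a ≤ l i) :
    a * trace A ≤ trace (diagonal l * A) := by
  rw [trace_diagonal_mul_eq_sum, trace, Finset.mul_sum]
  exact Finset.sum_le_sum fun i _ ↦ mul_le_mul_of_nonneg_right (ha i) hA.diag_nonneg

theorem PosSemidef.trace_diagonal_mul_le_mul_trace [DecidableEq n] {A : Matrix n n ℝ}
    (hA : A.PosSemidef) {l : n → ℝ} {b : ℝ} (hb : ∀ i, l i ≤ b) :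
    trace (diagonal l * A) ≤ b * trace A := by
  rw [trace_diagonal_mul_eq_sum, trace, Finset.mul_sum]
  exact Finset.sum_le_sum fun i _ ↦ mul_le_mul_of_nonneg_right (hb i) hA.diag_nonneg

section Orthonormal

variable [DecidableEq n] {U W : Matrix m n ℝ}

theorem isIdempotentElem_mul_transpose (hU : Uᵀ * U = 1) : IsIdempotentElem (U * Uᵀ) := by
  rw [IsIdempotentElem, Matrix.mul_assoc, ← Matrix.mul_assoc Uᵀ, hU, Matrix.one_mul]

theorem trace_mul_transpose_of_transpose_mul_eq_one (hU : Uᵀ * U = 1) :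
    trace (U * Uᵀ) = Fintype.card n := by
  rw [trace_mul_comm, hU, trace_one]

theorem trace_mul_transpose_sub_eq_zero (hU : Uᵀ * U = 1) (hW : Wᵀ * W = 1) :
    trace (U * Uᵀ - W * Wᵀ) = 0 := by
  rw [trace_sub, trace_mul_transpose_of_transpose_mul_eq_one hU,
    trace_mul_transpose_of_transpose_mul_eq_one hW, sub_self]

variable [DecidableEq m]

theorem posSemidef_one_sub_mul_transpose (hW : Wᵀ * W = 1) : (1 - W * Wᵀ).PosSemidef := by
  have hP := (isIdempotentElem_mul_transpose hW).one_sub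
  have hsymm : (1 - W * Wᵀ)ᴴ = 1 - W * Wᵀ := by
    simp [conjTranspose_eq_transpose_of_trivial, transpose_sub]
  have h := posSemidef_conjTranspose_mul_self (1 - W * Wᵀ)
  rwa [hsymm, hP.eq] at h

theorem posSemidef_transpose_mul_one_sub_mul (U : Matrix m n ℝ) (hW : Wᵀ * W = 1) :
    (Uᵀ * (1 - W * Wᵀ) * U).PosSemidef := by
  simpa [conjTranspose_eq_transpose_of_trivial] using
    (posSemidef_one_sub_mul_transpose hW).conjTranspose_mul_mul_same U

theorem transpose_mul_sub_mul (hU : Uᵀ * U = 1) (W : Matrix m n ℝ) :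
    Uᵀ * (U * Uᵀ - W * Wᵀ) * U = Uᵀ * (1 - W * Wᵀ) * U := by
  simp only [Matrix.mul_sub, Matrix.sub_mul, Matrix.mul_one, ← Matrix.mul_assoc, hU,
    Matrix.one_mul]

theorem trace_mul_transpose_sub_sq (hU : Uᵀ * U = 1) (hW : Wᵀ * W = 1) :
    trace ((U * Uᵀ - W * Wᵀ) * (U * Uᵀ - W * Wᵀ)) = 2 * trace (Uᵀ * (1 - W * Wᵀ) * U) := by
  have hcross : trace (W * Wᵀ * (U * Uᵀ)) = trace (U * Uᵀ * (W * Wᵀ)) := trace_mul_comm _ _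
  have hcompress : trace (Uᵀ * (W * Wᵀ) * U) = trace (U * Uᵀ * (W * Wᵀ)) := by
    rw [trace_mul_comm, ← Matrix.mul_assoc]
  rw [Matrix.sub_mul, Matrix.mul_sub, Matrix.mul_sub, (isIdempotentElem_mul_transpose hU).eq,
    (isIdempotentElem_mul_transpose hW).eq, Matrix.mul_sub, Matrix.sub_mul, Matrix.mul_one,
    hU]
  simp only [trace_sub, trace_one, hcross, hcompress,
    trace_mul_transpose_of_transpose_mul_eq_one hU, trace_mul_transpose_of_transpose_mul_eq_one hW]
  ring

theorem trace_spiked_mul_sub (hU : Uᵀ * U = 1) (hW : Wᵀ * W = 1) (c : ℝ) (l : n → ℝ) :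
    trace ((c • (1 : Matrix m m ℝ) + U * diagonal l * Uᵀ)ᵀ * (U * Uᵀ - W * Wᵀ)) =
      trace (diagonal l * (Uᵀ * (1 - W * Wᵀ) * U)) := by
  have hsymm : (c • (1 : Matrix m m ℝ) + U * diagonal l * Uᵀ)ᵀ =
      c • 1 + U * diagonal l * Uᵀ := by
    simp [transpose_add, transpose_mul, Matrix.mul_assoc]
  rw [hsymm, Matrix.add_mul, trace_add, Matrix.smul_mul, Matrix.one_mul, trace_smul,
    trace_mul_transpose_sub_eq_zero hU hW, smul_zero, zero_add, ← transpose_mul_sub_mul hU,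
    Matrix.mul_assoc U, Matrix.mul_assoc U, trace_mul_comm U]
  simp only [Matrix.mul_assoc]

end Orthonormal

end Matrix

theorem frob_sq_eq_trace_transpose_mul_self {m n : ℕ} (A : Matrix (Fin m) (Fin n) ℝ) :
    frob A ^ 2 = trace (Aᵀ * A) := by
  rw [frob, Real.sq_sqrt (by positivity), Finset.sum_comm]
  simp [trace, mul_apply, sq]

/-- For `Σ = σ²I + UΓUᵀ`, `U, W ∈ O(p,r)`, `Γ = diag(λ1,...,λr)` with
`λ1 ≥ ... ≥ λr > 0`:
`(λr/2)‖UUᵀ−WWᵀ‖_F² ≤ ⟨Σ, UUᵀ−WWᵀ⟩ ≤ (λ1/2)‖UUᵀ−WWᵀ‖_F²`. -/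
theorem spiked_covariance_quadratic_bounds {p r : ℕ} (hr : 0 < r)
    (U W : Matrix (Fin p) (Fin r) ℝ)
    (hU : Uᵀ * U = 1) (hW : Wᵀ * W = 1)
    (σ : ℝ)
    (l : Fin r → ℝ)
    (hmono : ∀ i j : Fin r, i ≤ j → l j ≤ l i) :
    (l ⟨r - 1, by omega⟩) / 2 * frob (U * Uᵀ - W * Wᵀ) ^ 2 ≤
      trace ((σ ^ 2 • (1 : Matrix (Fin p) (Fin p) ℝ) + U * diagonal l * Uᵀ)ᵀ *
        (U * Uᵀ - W * Wᵀ)) ∧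
    trace ((σ ^ 2 • (1 : Matrix (Fin p) (Fin p) ℝ) + U * diagonal l * Uᵀ)ᵀ *
        (U * Uᵀ - W * Wᵀ)) ≤
      (l ⟨0, hr⟩) / 2 * frob (U * Uᵀ - W * Wᵀ) ^ 2 := by
  have hK := posSemidef_transpose_mul_one_sub_mul U hW
  have hfrob : frob (U * Uᵀ - W * Wᵀ) ^ 2 = 2 * trace (Uᵀ * (1 - W * Wᵀ) * U) := by
    rw [frob_sq_eq_trace_transpose_mul_self, ← trace_mul_transpose_sub_sq hU hW]
    simp [transpose_sub, transpose_mul]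
  rw [trace_spiked_mul_sub hU hW, hfrob]
  constructor
  · have := hK.mul_trace_le_trace_diagonal_mul fun i ↦ hmono i ⟨r - 1, by omega⟩
      (Fin.le_iff_val_le_val.mpr (Nat.le_sub_one_of_lt i.isLt))
    linarith
  · have := hK.trace_diagonal_mul_le_mul_trace fun i ↦ hmono ⟨0, hr⟩ i
      (Fin.le_iff_val_le_val.mpr (Nat.zero_le _))
    linarith
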